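/- arXiv:1111.0701 — 8 statements merged into one kernel-verified Lean document; each statement's English description precedes it below -/
import Mathlib

section
/- Let W be a group, χ : W → W an automorphism with χ ∘ χ = id, and M, K normal subgroups of W. If M ∩ K ≤ M ∩ χ(M) and M ∩ K ≤ K ∩ χ(K), then M ∩ K = χ(M) ∩ χ(K). -/
/-- If `M ∩ K ≤ M ∩ χ(M)` and `M ∩ K ≤ K ∩ χ(K)` for an involutive automorphism `χ`,
then `M ∩ K = χ(M) ∩ χ(K)`. -/
theorem stmt_4 {W : Type*} [Group W] (χ : W ≃* W) (hχ : ∀ w, χ (χ w) = w)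
    (M K : Subgroup W) [M.Normal] [K.Normal]
    (h1 : M ⊓ K ≤ M ⊓ M.map χ.toMonoidHom) (h2 : M ⊓ K ≤ K ⊓ K.map χ.toMonoidHom) :
    M ⊓ K = M.map χ.toMonoidHom ⊓ K.map χ.toMonoidHom := by
  have hmap : ∀ H : Subgroup W, (H.map χ.toMonoidHom).map χ.toMonoidHom = H := by
    intro H
    rw [Subgroup.map_map]
    convert Subgroup.map_id H using 2
    ext x
    simp [hχ x]
  have hinf : (M ⊓ K).map χ.toMonoidHom = M.map χ.toMonoidHom ⊓ K.map χ.toMonoidHom := by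
    ext x
    constructor
    · rintro ⟨y, ⟨hyM, hyK⟩, rfl⟩
      exact ⟨⟨y, hyM, rfl⟩, ⟨y, hyK, rfl⟩⟩
    · rintro ⟨⟨a, ha, hax⟩, ⟨b, hb, hbx⟩⟩
      have : a = b := χ.injective (hax.trans hbx.symm)
      exact ⟨a, ⟨ha, this ▸ hb⟩, hax⟩
  have hle : M ⊓ K ≤ (M ⊓ K).map χ.toMonoidHom := by
    rw [hinf]
    exact le_inf (fun x hx => (h1 hx).2) (fun x hx => (h2 hx).2)
  have hge : (M ⊓ K).map χ.toMonoidHom ≤ M ⊓ K := by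
    have := Subgroup.map_mono (f := χ.toMonoidHom) hle
    rwa [hmap] at this
  rw [← hinf]
  exact le_antisymm hle hge
end

section
/- Let W be a group, χ an automorphism of W with χ ∘ χ = id, and M, K normal subgroups of W of finite index. If M ∩ K = χ(M) ∩ χ(K), then [M : M ∩ χ(M)] divides [W : K] and [K : K ∩ χ(K)] divides [W : M]. -/
theorem Subgroup.relIndex_dvd_index_of_inf_le {G : Type*} [Group G] {H M : Subgroup G}
    (K : Subgroup G) [K.Normal] (hle : M ⊓ K ≤ H) : H.relIndex M ∣ K.index :=
  calc H.relIndex M ∣ (M ⊓ K).relIndex M := Subgroup.relIndex_dvd_of_le_left M hle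
    _ = K.relIndex M := Subgroup.inf_relIndex_left M K
    _ ∣ K.index := Subgroup.relIndex_dvd_index_of_normal K M

theorem stmt_5_general {W : Type*} [Group W] (χ : W ≃* W)
    (M K : Subgroup W) [M.Normal] [K.Normal]
    (h : M ⊓ K = M.map χ.toMonoidHom ⊓ K.map χ.toMonoidHom) :
    (M.map χ.toMonoidHom).relIndex M ∣ K.index ∧
      (K.map χ.toMonoidHom).relIndex K ∣ M.index :=
  ⟨Subgroup.relIndex_dvd_index_of_inf_le K (h.le.trans inf_le_left),
    Subgroup.relIndex_dvd_index_of_inf_le M (inf_comm K M ▸ h.le.trans inf_le_right)⟩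

/-- If `M ∩ K = χ(M) ∩ χ(K)` for an involutive automorphism `χ` and `M, K` have finite index,
then `[M : M ∩ χ(M)]` divides `[W : K]` and `[K : K ∩ χ(K)]` divides `[W : M]`. -/
theorem stmt_5 {W : Type*} [Group W] (χ : W ≃* W) (hχ : ∀ w, χ (χ w) = w)
    (M K : Subgroup W) [M.Normal] [K.Normal] [M.FiniteIndex] [K.FiniteIndex]
    (h : M ⊓ K = M.map χ.toMonoidHom ⊓ K.map χ.toMonoidHom) :
    (M.map χ.toMonoidHom).relIndex M ∣ K.index ∧
      (K.map χ.toMonoidHom).relIndex K ∣ M.index :=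
  stmt_5_general χ M K h
end

section
/- Let W be a group, χ an automorphism of W with χ ∘ χ = id, and M, K normal subgroups of W of finite index such that [W : M] ≠ [W : K], [M : M ∩ χ(M)] = [W : M], and [K : K ∩ χ(K)] = [W : K]. Then M ∩ K ≠ χ(M) ∩ χ(K). -/
/-!
If `M ⊓ K = χ(M) ⊓ χ(K)`, then `M ⊓ K ≤ χ(M) ⊓ M`, a subgroup of index `[W : M]²`, while
`[W : M ⊓ K] ≤ [W : M] [W : K]`; hence `[W : M] ≤ [W : K]`, and symmetrically `[W : K] ≤ [W : M]`.
-/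

namespace Subgroup

variable {G : Type*} [Group G]

theorem index_le_of_inf_le_of_relIndex_eq_index {H N L : Subgroup G} [N.FiniteIndex]
    [L.FiniteIndex] (hle : N ⊓ L ≤ H) (hH : H.relIndex N = N.index) : N.index ≤ L.index := by
  have hsq : (H ⊓ N).index = N.index * N.index := by
    rw [← relIndex_mul_index inf_le_right, inf_relIndex_right, hH]
  have hmul : N.index * N.index ≤ N.index * L.index :=
    calc N.index * N.index = (H ⊓ N).index := hsq.symm
      _ ≤ (N ⊓ L).index := index_antitone (le_inf hle inf_le_left)
      _ ≤ N.index * L.index := index_inf_le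
  exact Nat.le_of_mul_le_mul_left hmul (Nat.pos_of_ne_zero FiniteIndex.index_ne_zero)

end Subgroup

theorem stmt_7_general {W : Type*} [Group W] (χ : W ≃* W)
    (M K : Subgroup W) [M.FiniteIndex] [K.FiniteIndex]
    (hne : M.index ≠ K.index)
    (hM : (M.map χ.toMonoidHom).relIndex M = M.index)
    (hK : (K.map χ.toMonoidHom).relIndex K = K.index) :
    M ⊓ K ≠ M.map χ.toMonoidHom ⊓ K.map χ.toMonoidHom := by
  intro heq
  have hMK : M.index ≤ K.index :=
    Subgroup.index_le_of_inf_le_of_relIndex_eq_index (heq.le.trans inf_le_left) hM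
  have hKM : K.index ≤ M.index :=
    Subgroup.index_le_of_inf_le_of_relIndex_eq_index
      ((inf_comm K M).le.trans (heq.le.trans inf_le_right)) hK
  exact hne (le_antisymm hMK hKM)

/-- Totally chiral case: if `[W : M] ≠ [W : K]`, `[M : M ∩ χ(M)] = [W : M]` and
`[K : K ∩ χ(K)] = [W : K]`, then `M ∩ K ≠ χ(M) ∩ χ(K)`. -/
theorem stmt_7 {W : Type*} [Group W] (χ : W ≃* W) (hχ : ∀ w, χ (χ w) = w)
    (M K : Subgroup W) [M.Normal] [K.Normal] [M.FiniteIndex] [K.FiniteIndex]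
    (hne : M.index ≠ K.index)
    (hM : (M.map χ.toMonoidHom).relIndex M = M.index)
    (hK : (K.map χ.toMonoidHom).relIndex K = K.index) :
    M ⊓ K ≠ M.map χ.toMonoidHom ⊓ K.map χ.toMonoidHom :=
  stmt_7_general χ M K hne hM hK
end

section
/- Let W be a group, χ an automorphism of W with χ ∘ χ = id, and M, K normal subgroups of finite index in W. Let g₁ = gcd([M : M ∩ χ(M)], [W : K]). Then [M : M ∩ χ(M)] / g₁ divides [M ∩ K : (M ∩ K) ∩ χ(M ∩ K)]. -/
/-!
Write `a = [M : M ∩ χM]`, `b = [W : K]` and `f = [M ∩ K : M ∩ K ∩ χM]`. Since `M ∩ K ∩ χM ≤ M ∩ χM`,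
`a` divides `[M : M ∩ K ∩ χM] = f · [M : M ∩ K]`, and `[M : M ∩ K] = [MK : K]` divides `b` as `K` is
normal; hence `a ∣ b f`, so `a / gcd(a, b) ∣ f`. Finally `χ(M ∩ K) ≤ χM`, so `f` divides
`[M ∩ K : (M ∩ K) ∩ χ(M ∩ K)]`.
-/

theorem Nat.div_gcd_dvd_of_dvd_mul {a b c : ℕ} (hb : b ≠ 0) (h : a ∣ b * c) :
    a / a.gcd b ∣ c := by
  have hg : 0 < a.gcd b := Nat.gcd_pos_of_pos_right a (Nat.pos_of_ne_zero hb)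
  refine (Nat.coprime_div_gcd_div_gcd hg).dvd_of_dvd_mul_left ?_
  rw [← Nat.mul_div_right_comm (Nat.gcd_dvd_right a b)]
  exact Nat.div_dvd_div (Nat.gcd_dvd_left a b) h

theorem Subgroup.relIndex_dvd_relIndex_inf_mul_relIndex {G : Type*} [Group G]
    (H K L : Subgroup G) : H.relIndex L ∣ H.relIndex (K ⊓ L) * K.relIndex L := by
  rw [relIndex_inf_mul_relIndex]
  exact relIndex_dvd_of_le_left L inf_le_left

theorem Subgroup.relIndex_dvd_index_mul_relIndex_inf {G : Type*} [Group G]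
    (H K L : Subgroup G) [K.Normal] : H.relIndex L ∣ K.index * H.relIndex (L ⊓ K) := by
  rw [mul_comm, inf_comm]
  exact (H.relIndex_dvd_relIndex_inf_mul_relIndex K L).trans
    (mul_dvd_mul_left _ (K.relIndex_dvd_index_of_normal L))

theorem stmt_8_general {W : Type*} [Group W] (χ : W ≃* W)
    (M K : Subgroup W) [K.Normal] [K.FiniteIndex] :
    (M.map χ.toMonoidHom).relIndex M / Nat.gcd ((M.map χ.toMonoidHom).relIndex M) K.index ∣
      ((M ⊓ K).map χ.toMonoidHom).relIndex (M ⊓ K) :=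
  (Nat.div_gcd_dvd_of_dvd_mul Subgroup.FiniteIndex.index_ne_zero
      ((M.map χ.toMonoidHom).relIndex_dvd_index_mul_relIndex_inf K M)).trans
    (Subgroup.relIndex_dvd_of_le_left _ (Subgroup.map_mono inf_le_left))

/-- Lower bound on the chirality group of the mix: with `g₁ = gcd([M : M ∩ χ(M)], [W : K])`,
the number `[M : M ∩ χ(M)] / g₁` divides `[M ∩ K : (M ∩ K) ∩ χ(M ∩ K)]`. -/
theorem stmt_8 {W : Type*} [Group W] (χ : W ≃* W) (hχ : ∀ w, χ (χ w) = w)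
    (M K : Subgroup W) [M.Normal] [K.Normal] [M.FiniteIndex] [K.FiniteIndex] :
    (M.map χ.toMonoidHom).relIndex M / Nat.gcd ((M.map χ.toMonoidHom).relIndex M) K.index ∣
      ((M ⊓ K).map χ.toMonoidHom).relIndex (M ⊓ K) :=
  stmt_8_general χ M K
end

section
/- Let W be a group, χ an automorphism of W with χ ∘ χ = id, and M, K normal subgroups of W with [W : K] finite. If [M : M ∩ χ(M)] is infinite, then [M ∩ K : (M ∩ K) ∩ χ(M ∩ K)] is infinite. -/
namespace Subgroup

variable {G : Type*} [Group G]

/-- Passing from `H` to the finite-index subgroup `H ⊓ K` multiplies relative indices by the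
finite factor `[H : H ⊓ K]`, so it cannot turn an infinite relative index into a finite one. -/
theorem relIndex_ne_zero_of_relIndex_inf_ne_zero {A H K : Subgroup G} [K.FiniteIndex]
    (hA : A.relIndex (H ⊓ K) ≠ 0) : A.relIndex H ≠ 0 := by
  have hKH : K.relIndex H ≠ 0 := (isFiniteRelIndex_of_finiteIndex (H := K)).relIndex_ne_zero
  have hAK : (A ⊓ K).relIndex H ≠ 0 := by
    rw [← relIndex_inf_mul_relIndex, inf_comm K H]
    exact mul_ne_zero hA hKH
  exact mt (relIndex_eq_zero_of_le_left inf_le_left) hAK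

end Subgroup

theorem stmt_9_general {W : Type*} [Group W] (χ : W ≃* W)
    (M K : Subgroup W) [K.FiniteIndex]
    (h : (M.map χ.toMonoidHom).relIndex M = 0) :
    ((M ⊓ K).map χ.toMonoidHom).relIndex (M ⊓ K) = 0 := by
  by_contra hMK
  have hM : (M.map χ.toMonoidHom).relIndex (M ⊓ K) ≠ 0 :=
    mt (Subgroup.relIndex_eq_zero_of_le_left (Subgroup.map_mono inf_le_left)) hMK
  exact Subgroup.relIndex_ne_zero_of_relIndex_inf_ne_zero hM h

/-- If `[M : M ∩ χ(M)]` is infinite (relindex `0`) and `[W : K]` is finite, then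
`[M ∩ K : (M ∩ K) ∩ χ(M ∩ K)]` is infinite (relindex `0`). -/
theorem stmt_9 {W : Type*} [Group W] (χ : W ≃* W) (hχ : ∀ w, χ (χ w) = w)
    (M K : Subgroup W) [M.Normal] [K.Normal] [K.FiniteIndex]
    (h : (M.map χ.toMonoidHom).relIndex M = 0) :
    ((M ⊓ K).map χ.toMonoidHom).relIndex (M ⊓ K) = 0 :=
  stmt_9_general χ M K h
end

section
/- Let W be a group, χ an automorphism of W with χ ∘ χ = id, M a normal subgroup of W, and K a χ-invariant normal subgroup of W (χ(K) = K). Then (M ∩ K)·χ(M ∩ K) / χ(M ∩ K) embeds as a normal subgroup of M·χ(M)/χ(M); equivalently, the chirality group X(P◊Q) of the mix of a chiral polytope P with a directly regular polytope Q is isomorphic to a normal subgroup of X(P). -/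
open Pointwise


/-- If `K` is a `χ`-invariant normal subgroup and `M` is normal, then with `N = M ∩ K`,
the group `N·χ(N)/χ(N)` is isomorphic to a normal subgroup of `M·χ(M)/χ(M)`;
i.e. the chirality group of the mix is a normal subgroup of `X(P)`. -/
theorem stmt_10 {W : Type*} [Group W] (χ : W ≃* W) (hχ : ∀ w, χ (χ w) = w)
    (M K : Subgroup W) [M.Normal] [K.Normal] (hK : K.map χ.toMonoidHom = K)
    [((M.map χ.toMonoidHom).subgroupOf (M ⊔ M.map χ.toMonoidHom)).Normal]
    [(((M ⊓ K).map χ.toMonoidHom).subgroupOf ((M ⊓ K) ⊔ (M ⊓ K).map χ.toMonoidHom)).Normal] :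
    ∃ H : Subgroup
        (↥(M ⊔ M.map χ.toMonoidHom) ⧸ (M.map χ.toMonoidHom).subgroupOf (M ⊔ M.map χ.toMonoidHom)),
      H.Normal ∧ Nonempty
        ((↥((M ⊓ K) ⊔ (M ⊓ K).map χ.toMonoidHom) ⧸
          ((M ⊓ K).map χ.toMonoidHom).subgroupOf ((M ⊓ K) ⊔ (M ⊓ K).map χ.toMonoidHom)) ≃* H) := by
  classical
  set φ := χ.toMonoidHom with hφ
  haveI hNmapNorm : ((M ⊓ K).map φ).Normal :=
    Subgroup.Normal.map inferInstance φ χ.surjective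
  haveI hSnorm : ((M ⊓ K) ⊔ (M ⊓ K).map φ).Normal := Subgroup.sup_normal _ _
  set S := (M ⊓ K) ⊔ (M ⊓ K).map φ with hS
  set T := M ⊔ M.map φ with hT
  have hST : S ≤ T := sup_le_sup inf_le_left (Subgroup.map_mono inf_le_left)
  set D := (M.map φ).subgroupOf T with hD
  set E := ((M ⊓ K).map φ).subgroupOf S with hE
  set f : ↥S →* ↥T ⧸ D := (QuotientGroup.mk' D).comp (Subgroup.inclusion hST) with hf
  -- key: elements of S lying in M.map φ lie in (M ⊓ K).map φ
  have key : ∀ w ∈ S, w ∈ M.map φ → w ∈ (M ⊓ K).map φ := by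
    intro w hw hwM
    have : w ∈ ((M ⊓ K : Subgroup W) : Set W) * ((M ⊓ K).map φ : Set W) := by
      rw [← Subgroup.mul_normal]; exact hw
    obtain ⟨n, hn, c, hc, rfl⟩ := this
    have hcM : c ∈ M.map φ := Subgroup.map_mono inf_le_left hc
    have hnM : n ∈ M.map φ := by
      have : n = n * c * c⁻¹ := by group
      rw [this]; exact mul_mem hwM (inv_mem hcM)
    have hnK : n ∈ K.map φ := by rw [hK]; exact hn.2
    have hnMK : n ∈ (M ⊓ K).map φ := by
      rw [Subgroup.map_inf _ _ _ χ.injective]; exact ⟨hnM, hnK⟩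
    exact mul_mem hnMK hc
  have hker : f.ker = E := by
    ext s
    simp only [hf, MonoidHom.mem_ker, MonoidHom.comp_apply, QuotientGroup.mk'_apply,
      QuotientGroup.eq_one_iff, hE, Subgroup.mem_subgroupOf]
    constructor
    · intro h
      exact key (s : W) s.2 h
    · intro h
      exact Subgroup.map_mono inf_le_left h
  refine ⟨f.range, ?_, ⟨(QuotientGroup.quotientMulEquivOfEq hker.symm).trans (QuotientGroup.quotientKerEquivRange f)⟩⟩
  constructor
  intro x hx g
  obtain ⟨s, rfl⟩ := hx
  obtain ⟨t, rfl⟩ := QuotientGroup.mk'_surjective D g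
  refine ⟨⟨(t : W) * (s : W) * (t : W)⁻¹, hSnorm.conj_mem _ s.2 _⟩, ?_⟩
  have hincl : (Subgroup.inclusion hST) (⟨(t : W) * (s : W) * (t : W)⁻¹,
      hSnorm.conj_mem _ s.2 _⟩ : ↥S) = t * (Subgroup.inclusion hST) s * t⁻¹ := by
    ext; simp [Subgroup.coe_inclusion]
  simp only [hf, MonoidHom.comp_apply, hincl, QuotientGroup.mk'_apply]
  rfl
end

section
/- Let W be a group, χ an automorphism of W with χ ∘ χ = id, M a normal subgroup of W of finite index with χ(M) ≠ M such that the group M/(M ∩ χ(M)) is simple, and K a χ-invariant normal subgroup of finite index such that [M : M ∩ χ(M)] does not divide [W : K]. Then M ∩ K is not χ-invariant, and (M ∩ K)/((M ∩ K) ∩ χ(M ∩ K)) ≅ M/(M ∩ χ(M)). -/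
/-!
Let `N = χ(M)`. Since `K` is normal, the image of `M ∩ K` in the simple group `M/N` is normal,
hence trivial or everything. If it were trivial, `M ∩ K ≤ N` and `[M : N]` would divide
`[M : M ∩ K]`, which divides `[W : K]`. So `M ∩ K` maps onto `M/N`, with kernel
`N ∩ K = χ(M ∩ K)` because `K` is χ-invariant. Finally `χ(M ∩ K) = M ∩ K` would again give
`M ∩ K ≤ N`.
-/

namespace Subgroup

variable {G : Type*} [Group G]

theorem relIndex_dvd_index_of_inf_le_s11 {M N K : Subgroup G} [K.Normal] (hle : M ⊓ K ≤ N) :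
    N.relIndex M ∣ K.index :=
  calc N.relIndex M ∣ (M ⊓ K).relIndex M := relIndex_dvd_of_le_left M hle
    _ = K.relIndex M := by rw [inf_comm, inf_relIndex_right]
    _ ∣ K.index := relIndex_dvd_index_of_normal K M

def infToQuotient (M N K : Subgroup G) [(N.subgroupOf M).Normal] :
    ↥(M ⊓ K) →* ↥M ⧸ N.subgroupOf M :=
  (QuotientGroup.mk' _).comp (inclusion inf_le_left)

variable {M N K : Subgroup G} [(N.subgroupOf M).Normal]

theorem ker_infToQuotient :
    (infToQuotient M N K).ker = (N ⊓ K).subgroupOf (M ⊓ K) := by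
  ext x
  simp only [infToQuotient, MonoidHom.mem_ker, MonoidHom.comp_apply, QuotientGroup.mk'_apply,
    QuotientGroup.eq_one_iff, mem_subgroupOf, coe_inclusion, mem_inf]
  exact ⟨fun h => ⟨h, x.2.2⟩, And.left⟩

theorem range_infToQuotient :
    (infToQuotient M N K).range = (K.subgroupOf M).map (QuotientGroup.mk' _) := by
  rw [infToQuotient, MonoidHom.range_comp, inclusion_range, inf_subgroupOf_left]

theorem infToQuotient_surjective [K.Normal] (hsimple : IsSimpleGroup (↥M ⧸ N.subgroupOf M))
    (hdvd : ¬ N.relIndex M ∣ K.index) : Function.Surjective (infToQuotient M N K) := by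
  rw [← MonoidHom.range_eq_top, range_infToQuotient]
  have hnormal : ((K.subgroupOf M).map (QuotientGroup.mk' (N.subgroupOf M))).Normal :=
    normal_subgroupOf.map _ (QuotientGroup.mk'_surjective _)
  refine (hsimple.eq_bot_or_eq_top_of_normal _ hnormal).resolve_left fun hbot => hdvd ?_
  rw [map_eq_bot_iff, QuotientGroup.ker_mk'] at hbot
  refine relIndex_dvd_index_of_inf_le_s11 fun x hx => ?_
  exact mem_subgroupOf.mp (hbot (mem_subgroupOf.mpr hx.2) : (⟨x, hx.1⟩ : M) ∈ N.subgroupOf M)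

end Subgroup

open Subgroup in
theorem stmt_11_general {W : Type*} [Group W] (χ : W ≃* W)
    (M K : Subgroup W) [K.Normal]
    (hK : K.map χ.toMonoidHom = K)
    [((M.map χ.toMonoidHom).subgroupOf M).Normal]
    [(((M ⊓ K).map χ.toMonoidHom).subgroupOf (M ⊓ K)).Normal]
    (hsimple : IsSimpleGroup (↥M ⧸ (M.map χ.toMonoidHom).subgroupOf M))
    (hdvd : ¬ (M.map χ.toMonoidHom).relIndex M ∣ K.index) :
    (M ⊓ K).map χ.toMonoidHom ≠ M ⊓ K ∧
      Nonempty ((↥(M ⊓ K) ⧸ ((M ⊓ K).map χ.toMonoidHom).subgroupOf (M ⊓ K)) ≃*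
        (↥M ⧸ (M.map χ.toMonoidHom).subgroupOf M)) := by
  have hmap : (M ⊓ K).map χ.toMonoidHom = M.map χ.toMonoidHom ⊓ K := by
    rw [map_inf M K _ χ.injective, hK]
  refine ⟨fun hinv => hdvd (relIndex_dvd_index_of_inf_le_s11 ?_), ?_⟩
  · calc M ⊓ K = (M ⊓ K).map χ.toMonoidHom := hinv.symm
      _ ≤ M.map χ.toMonoidHom := map_mono inf_le_left
  · exact ⟨(QuotientGroup.quotientMulEquivOfEq (by rw [ker_infToQuotient, hmap])).trans
      (QuotientGroup.quotientKerEquivOfSurjective _ (infToQuotient_surjective hsimple hdvd))⟩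

/-- If the chirality group `M/(M ∩ χ(M))` is simple, `χ(M) ≠ M`, `K` is χ-invariant, and
`[M : M ∩ χ(M)]` does not divide `[W : K]`, then `M ∩ K` is not χ-invariant and
`(M ∩ K)/((M ∩ K) ∩ χ(M ∩ K)) ≅ M/(M ∩ χ(M))`. -/
theorem stmt_11 {W : Type*} [Group W] (χ : W ≃* W) (hχ : ∀ w, χ (χ w) = w)
    (M K : Subgroup W) [M.Normal] [K.Normal] [M.FiniteIndex] [K.FiniteIndex]
    (hM : M.map χ.toMonoidHom ≠ M) (hK : K.map χ.toMonoidHom = K)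
    [((M.map χ.toMonoidHom).subgroupOf M).Normal]
    [(((M ⊓ K).map χ.toMonoidHom).subgroupOf (M ⊓ K)).Normal]
    (hsimple : IsSimpleGroup (↥M ⧸ (M.map χ.toMonoidHom).subgroupOf M))
    (hdvd : ¬ (M.map χ.toMonoidHom).relIndex M ∣ K.index) :
    (M ⊓ K).map χ.toMonoidHom ≠ M ⊓ K ∧
      Nonempty ((↥(M ⊓ K) ⧸ ((M ⊓ K).map χ.toMonoidHom).subgroupOf (M ⊓ K)) ≃*
        (↥M ⧸ (M.map χ.toMonoidHom).subgroupOf M)) :=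
  stmt_11_general χ M K hK hsimple hdvd
end

section
/- Let G and H be groups, with H simple, and let f₂ : G' → G and f₁ : G' → G'' and g : G'' → G be homomorphisms with g ∘ f₁ = f₂, where ker f₂ is isomorphic to a normal subgroup of H. If ker f₁ is trivial then ker f₂ = ker g, and if ker f₁ ≅ H then ker g is trivial. -/
/-- Diagram-chasing step: in a commuting triangle `g ∘ f₁ = f₂` of surjective-enough covering
maps, with `H` a finite simple group and `ker f₂` isomorphic to a normal subgroup of `H`:
if `ker f₁` is trivial then `ker f₂` is carried by `f₁` onto `ker g`, and if `ker f₁ ≅ H`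
then `ker g` is trivial. -/
theorem stmt_12 {G G' G'' H : Type*} [Group G] [Group G'] [Group G''] [Group H]
    [IsSimpleGroup H] [Finite H]
    (f₂ : G' →* G) (f₁ : G' →* G'') (g : G'' →* G)
    (hf₁ : Function.Surjective f₁) (hcomm : g.comp f₁ = f₂)
    (hker : ∃ S : Subgroup H, S.Normal ∧ Nonempty (f₂.ker ≃* S)) :
    (f₁.ker = ⊥ → f₂.ker.map f₁ = g.ker) ∧
      (Nonempty (f₁.ker ≃* H) → g.ker = ⊥) := by
  have hcomap : f₂.ker = g.ker.comap f₁ := by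
    rw [← hcomm]; rfl
  have hmap : f₂.ker.map f₁ = g.ker := by
    rw [hcomap, Subgroup.map_comap_eq, (MonoidHom.range_eq_top).2 hf₁, top_inf_eq]
  have hle : f₁.ker ≤ f₂.ker := by
    rw [hcomap]
    intro x hx
    simp only [MonoidHom.mem_ker] at hx
    simp [Subgroup.mem_comap, hx]
  refine ⟨fun _ => hmap, fun ⟨e⟩ => ?_⟩
  obtain ⟨S, hS, ⟨e₂⟩⟩ := hker
  have := hS
  rcases hS.eq_bot_or_eq_top with h | h
  · -- ker f₂ trivial, but ker f₁ ≤ ker f₂ and ker f₁ ≃ H nontrivial: contradiction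
    exfalso
    have hbot : f₂.ker = ⊥ := by
      have : Subsingleton S := by rw [h]; infer_instance
      have : Subsingleton f₂.ker := e₂.toEquiv.subsingleton
      exact Subgroup.eq_bot_of_subsingleton _
    have : Subsingleton f₁.ker := by
      have : f₁.ker = ⊥ := le_bot_iff.mp (hbot ▸ hle)
      rw [this]; infer_instance
    have : Subsingleton H := e.symm.toEquiv.subsingleton
    exact not_subsingleton H this
  · -- ker f₂ ≃ H, card argument: ker f₁ = ker f₂
    have e₂' : f₂.ker ≃* H := (e₂.trans (MulEquiv.subgroupCongr h)).trans Subgroup.topEquiv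
    have hcard : Nat.card f₁.ker = Nat.card f₂.ker := by
      rw [Nat.card_congr e.toEquiv, Nat.card_congr e₂'.toEquiv]
    have hfin : Finite f₂.ker := Finite.of_equiv H e₂'.symm.toEquiv
    have heq : f₁.ker = f₂.ker := Subgroup.eq_of_le_of_card_ge hle (le_of_eq hcard.symm)
    rw [← hmap, ← heq, Subgroup.map_eq_bot_iff]
end
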